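/- arXiv:1901.08029 — 3 statements merged into one kernel-verified Lean document; each statement's English description precedes it below -/
import Mathlib

section
/- Fix γ ∈ [0,1) and assume every induced kernel P_{π¹,π²} is γ-contractive and has a stationary distribution d_{π¹,π²}. Let I₂ ≥ 0 satisfy ‖P_{π¹,π²} − P_{π¹,π²'}‖_∞ ≤ I₂ · ‖π² − π²'‖_∞ for all policies π¹, π², π²'. Let (π¹_t, π²_t) and (π¹_{t−1}, π²_{t−1}) be policy pairs with ‖π¹_t − π¹_{t−1}‖_∞ ≤ ρ₁ and ‖π²_t − π²_{t−1}‖_∞ ≤ ρ₂. Then: (i) ‖d_{π¹_t,π²_t} − d_{π¹_{t−1},π²_{t−1}}‖₁ ≤ (ρ₁ + I₂·ρ₂)/(1 − γ); and (ii) for every agent-1 policy π¹, ‖d_{π¹,π²_t} − d_{π¹,π²_{t−1}}‖₁ ≤ I₂·ρ₂/(1 − γ). -/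
/-!
A stationary distribution is a fixed point of its kernel, so for kernels `K`, `K'` with
stationary `d`, `d'` and `K` `γ`-contractive,
`‖d - d'‖₁ = ‖dK - d'K'‖₁ ≤ ‖dK - d'K‖₁ + ‖d'K - d'K'‖₁ ≤ γ ‖d - d'‖₁ + ‖K - K'‖_∞`,
i.e. `‖d - d'‖₁ ≤ ‖K - K'‖_∞ / (1 - γ)`. The induced kernel is `1`-Lipschitz in the policy of
agent 1 and, by hypothesis, `I₂`-Lipschitz in that of agent 2; changing one policy at a time and
using the triangle inequality gives both bounds.
-/

/-- A probability vector on a finite type: nonnegative entries summing to 1. -/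
def IsProbVec {S : Type*} [Fintype S] (d : S → ℝ) : Prop :=
  (∀ s, 0 ≤ d s) ∧ ∑ s, d s = 1

/-- A policy: each row is a probability vector over actions. -/
def IsPolicy {S A : Type*} [Fintype A] (π : S → A → ℝ) : Prop :=
  ∀ s, (∀ a, 0 ≤ π s a) ∧ ∑ a, π s a = 1

/-- Maximum of a real-valued function over a nonempty finite type. -/
noncomputable def fmax {S : Type*} [Fintype S] [Nonempty S] (f : S → ℝ) : ℝ :=
  Finset.univ.sup' Finset.univ_nonempty f

/-- Policy distance ‖π − π'‖_∞ = max_s ∑_a |π(s,a) − π'(s,a)|. -/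
noncomputable def pdist {S A : Type*} [Fintype S] [Nonempty S] [Fintype A]
    (π π' : S → A → ℝ) : ℝ :=
  fmax (fun s => ∑ a, |π s a - π' s a|)

/-- Kernel distance ‖K − K'‖_∞ = max_s ∑_{s'} |K(s,s') − K'(s,s')|. -/
noncomputable def kdist {S : Type*} [Fintype S] [Nonempty S] (K K' : S → S → ℝ) : ℝ :=
  fmax (fun s => ∑ s', |K s s' - K' s s'|)

/-- The induced kernel P_{π₁,π₂}(s,s') = ∑_{a₁,a₂} π₁(s,a₁)·π₂(s,a₂)·P(s,a₁,a₂,s'). -/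
def kernel {S A₁ A₂ : Type*} [Fintype A₁] [Fintype A₂]
    (P : S → A₁ → A₂ → S → ℝ) (π₁ : S → A₁ → ℝ) (π₂ : S → A₂ → ℝ) : S → S → ℝ :=
  fun s s' => ∑ a₁, ∑ a₂, π₁ s a₁ * π₂ s a₂ * P s a₁ a₂ s'

/-- Row-vector–matrix multiplication: (d ⬝ K) s' = ∑ s, d s · K s s'. -/
def vmul {S : Type*} [Fintype S] (d : S → ℝ) (K : S → S → ℝ) : S → ℝ :=
  fun s' => ∑ s, d s * K s s'

/-- L1 norm of a vector: ‖x‖₁ = ∑ s, |x s|. -/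
def l1 {S : Type*} [Fintype S] (x : S → ℝ) : ℝ := ∑ s, |x s|

/-- γ-contractivity. -/
def Contractive {S : Type*} [Fintype S] (γ : ℝ) (K : S → S → ℝ) : Prop :=
  ∀ d d' : S → ℝ, IsProbVec d → IsProbVec d' →
    l1 (fun s => vmul d K s - vmul d' K s) ≤ γ * l1 (fun s => d s - d' s)

open Finset

lemma le_fmax {S : Type*} [Fintype S] [Nonempty S] (f : S → ℝ) (s : S) : f s ≤ fmax f :=
  le_sup' f (mem_univ s)

lemma fmax_le {S : Type*} [Fintype S] [Nonempty S] {f : S → ℝ} {c : ℝ} (h : ∀ s, f s ≤ c) :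
    fmax f ≤ c :=
  sup'_le _ _ fun s _ => h s

lemma l1_sub_le_add {S : Type*} [Fintype S] (f g h : S → ℝ) :
    l1 (fun s => f s - h s) ≤ l1 (fun s => f s - g s) + l1 (fun s => g s - h s) := by
  rw [l1, l1, l1, ← sum_add_distrib]
  exact sum_le_sum fun s _ => abs_sub_le (f s) (g s) (h s)

lemma l1_vmul_sub_le_kdist {S : Type*} [Fintype S] [Nonempty S] {d : S → ℝ} (hd : IsProbVec d)
    (K K' : S → S → ℝ) :
    l1 (fun s' => vmul d K s' - vmul d K' s') ≤ kdist K K' := by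
  calc l1 (fun s' => vmul d K s' - vmul d K' s')
      ≤ ∑ s', ∑ s, d s * |K s s' - K' s s'| := by
        refine sum_le_sum fun s' _ => ?_
        simp only [vmul, ← sum_sub_distrib]
        refine (abs_sum_le_sum_abs _ _).trans (sum_le_sum fun s _ => ?_)
        rw [← mul_sub, abs_mul, abs_of_nonneg (hd.1 s)]
    _ = ∑ s, d s * ∑ s', |K s s' - K' s s'| := by
        rw [sum_comm]
        simp only [mul_sum]
    _ ≤ ∑ s, d s * kdist K K' :=
        sum_le_sum fun s _ => mul_le_mul_of_nonneg_left
          (le_fmax (fun s => ∑ s', |K s s' - K' s s'|) s) (hd.1 s)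
    _ = kdist K K' := by rw [← sum_mul, hd.2, one_mul]

lemma l1_stationary_sub_le {S : Type*} [Fintype S] [Nonempty S] {γ : ℝ} (hγ : γ < 1)
    {K K' : S → S → ℝ} (hK : Contractive γ K) {d d' : S → ℝ} (hd : IsProbVec d)
    (hd' : IsProbVec d') (hdK : vmul d K = d) (hd'K' : vmul d' K' = d') :
    l1 (fun s => d s - d' s) ≤ kdist K K' / (1 - γ) := by
  have htri : l1 (fun s => d s - d' s) ≤
      l1 (fun s => vmul d K s - vmul d' K s) + l1 (fun s => vmul d' K s - vmul d' K' s) := by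
    simpa only [hdK, hd'K'] using l1_sub_le_add (vmul d K) (vmul d' K) (vmul d' K')
  have hcontr := hK d d' hd hd'
  have hpert := l1_vmul_sub_le_kdist hd' K K'
  rw [le_div_iff₀ (sub_pos.mpr hγ)]
  linarith

lemma sum_abs_kernel_sub_le {S A₁ A₂ : Type*} [Fintype S] [Fintype A₁] [Fintype A₂]
    {P : S → A₁ → A₂ → S → ℝ} (hP : ∀ s a₁ a₂, IsProbVec (P s a₁ a₂))
    (π₁ π₁' : S → A₁ → ℝ) {π₂ : S → A₂ → ℝ} (hπ₂ : IsPolicy π₂) (s : S) :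
    ∑ s', |kernel P π₁ π₂ s s' - kernel P π₁' π₂ s s'| ≤ ∑ a₁, |π₁ s a₁ - π₁' s a₁| := by
  calc ∑ s', |kernel P π₁ π₂ s s' - kernel P π₁' π₂ s s'|
      ≤ ∑ s', ∑ a₁, ∑ a₂, |π₁ s a₁ - π₁' s a₁| * (π₂ s a₂ * P s a₁ a₂ s') := by
        refine sum_le_sum fun s' _ => ?_
        rw [kernel, kernel, ← sum_sub_distrib]
        refine (abs_sum_le_sum_abs _ _).trans (sum_le_sum fun a₁ _ => ?_)
        rw [← sum_sub_distrib]
        refine (abs_sum_le_sum_abs _ _).trans (sum_le_sum fun a₂ _ => le_of_eq ?_)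
        rw [mul_assoc, mul_assoc, ← sub_mul, abs_mul,
          abs_of_nonneg (mul_nonneg ((hπ₂ s).1 a₂) ((hP s a₁ a₂).1 s'))]
    _ = ∑ a₁, |π₁ s a₁ - π₁' s a₁| * ∑ a₂, π₂ s a₂ * ∑ s', P s a₁ a₂ s' := by
        rw [sum_comm]
        refine sum_congr rfl fun a₁ _ => ?_
        rw [sum_comm]
        simp only [mul_sum]
    _ = ∑ a₁, |π₁ s a₁ - π₁' s a₁| := by
        simp only [fun a₁ a₂ => (hP s a₁ a₂).2, mul_one, (hπ₂ s).2]

lemma kdist_kernel_le_pdist_left {S A₁ A₂ : Type*} [Fintype S] [Nonempty S]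
    [Fintype A₁] [Fintype A₂]
    {P : S → A₁ → A₂ → S → ℝ} (hP : ∀ s a₁ a₂, IsProbVec (P s a₁ a₂))
    (π₁ π₁' : S → A₁ → ℝ) {π₂ : S → A₂ → ℝ} (hπ₂ : IsPolicy π₂) :
    kdist (kernel P π₁ π₂) (kernel P π₁' π₂) ≤ pdist π₁ π₁' :=
  fmax_le fun s => (sum_abs_kernel_sub_le hP π₁ π₁' hπ₂ s).trans
    (le_fmax (fun s => ∑ a, |π₁ s a - π₁' s a|) s)

theorem stmt_5_general {S A₁ A₂ : Type*} [Fintype S] [Nonempty S]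
    [Fintype A₁] [Fintype A₂]
    (P : S → A₁ → A₂ → S → ℝ) (hP : ∀ s a₁ a₂, IsProbVec (P s a₁ a₂))
    (γ : ℝ) (hγ1 : γ < 1)
    (hcontr : ∀ (π₁ : S → A₁ → ℝ) (π₂ : S → A₂ → ℝ), IsPolicy π₁ → IsPolicy π₂ →
      Contractive γ (kernel P π₁ π₂))
    (dstat : (S → A₁ → ℝ) → (S → A₂ → ℝ) → S → ℝ)
    (hdstat : ∀ (π₁ : S → A₁ → ℝ) (π₂ : S → A₂ → ℝ), IsPolicy π₁ → IsPolicy π₂ →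
      IsProbVec (dstat π₁ π₂) ∧ vmul (dstat π₁ π₂) (kernel P π₁ π₂) = dstat π₁ π₂)
    (I₂ : ℝ) (hI₂0 : 0 ≤ I₂)
    (hinfl : ∀ (π₁ : S → A₁ → ℝ) (π₂ π₂' : S → A₂ → ℝ),
      IsPolicy π₁ → IsPolicy π₂ → IsPolicy π₂' →
      kdist (kernel P π₁ π₂) (kernel P π₁ π₂') ≤ I₂ * pdist π₂ π₂')
    (ρ₁ ρ₂ : ℝ)
    (π₁t π₁p : S → A₁ → ℝ) (hπ₁t : IsPolicy π₁t) (hπ₁p : IsPolicy π₁p)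
    (π₂t π₂p : S → A₂ → ℝ) (hπ₂t : IsPolicy π₂t) (hπ₂p : IsPolicy π₂p)
    (hρ₁ : pdist π₁t π₁p ≤ ρ₁) (hρ₂ : pdist π₂t π₂p ≤ ρ₂) :
    l1 (fun s => dstat π₁t π₂t s - dstat π₁p π₂p s) ≤ (ρ₁ + I₂ * ρ₂) / (1 - γ) ∧
    ∀ π₁ : S → A₁ → ℝ, IsPolicy π₁ →
      l1 (fun s => dstat π₁ π₂t s - dstat π₁ π₂p s) ≤ I₂ * ρ₂ / (1 - γ) := by
  have hγ : 0 ≤ 1 - γ := by linarith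
  have stationary_bound : ∀ π₁ π₁' π₂ π₂', IsPolicy π₁ → IsPolicy π₁' → IsPolicy π₂ →
      IsPolicy π₂' → l1 (fun s => dstat π₁ π₂ s - dstat π₁' π₂' s) ≤
        kdist (kernel P π₁ π₂) (kernel P π₁' π₂') / (1 - γ) := by
    intro π₁ π₁' π₂ π₂' hπ₁ hπ₁' hπ₂ hπ₂'
    obtain ⟨hd, hdK⟩ := hdstat π₁ π₂ hπ₁ hπ₂
    obtain ⟨hd', hd'K'⟩ := hdstat π₁' π₂' hπ₁' hπ₂'
    exact l1_stationary_sub_le hγ1 (hcontr π₁ π₂ hπ₁ hπ₂) hd hd' hdK hd'K'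
  have change_agent₂ : ∀ π₁, IsPolicy π₁ →
      l1 (fun s => dstat π₁ π₂t s - dstat π₁ π₂p s) ≤ I₂ * ρ₂ / (1 - γ) := fun π₁ hπ₁ =>
    (stationary_bound _ _ _ _ hπ₁ hπ₁ hπ₂t hπ₂p).trans <| div_le_div_of_nonneg_right
      ((hinfl π₁ π₂t π₂p hπ₁ hπ₂t hπ₂p).trans (mul_le_mul_of_nonneg_left hρ₂ hI₂0)) hγ
  have change_agent₁ : l1 (fun s => dstat π₁t π₂t s - dstat π₁p π₂t s) ≤ ρ₁ / (1 - γ) :=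
    (stationary_bound _ _ _ _ hπ₁t hπ₁p hπ₂t hπ₂t).trans <| div_le_div_of_nonneg_right
      ((kdist_kernel_le_pdist_left hP π₁t π₁p hπ₂t).trans hρ₁) hγ
  refine ⟨?_, change_agent₂⟩
  rw [add_div]
  linarith [l1_sub_le_add (dstat π₁t π₂t) (dstat π₁p π₂t) (dstat π₁p π₂p),
    change_agent₂ π₁p hπ₁p]

/-- Lemma 2 of the paper: change magnitudes of stationary distributions
of the induced kernels across two consecutive episodes. -/
theorem stmt_5 {S A₁ A₂ : Type*} [Fintype S] [Nonempty S]
    [Fintype A₁] [Nonempty A₁] [Fintype A₂] [Nonempty A₂]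
    (P : S → A₁ → A₂ → S → ℝ) (hP : ∀ s a₁ a₂, IsProbVec (P s a₁ a₂))
    (γ : ℝ) (hγ0 : 0 ≤ γ) (hγ1 : γ < 1)
    (hcontr : ∀ (π₁ : S → A₁ → ℝ) (π₂ : S → A₂ → ℝ), IsPolicy π₁ → IsPolicy π₂ →
      Contractive γ (kernel P π₁ π₂))
    (dstat : (S → A₁ → ℝ) → (S → A₂ → ℝ) → S → ℝ)
    (hdstat : ∀ (π₁ : S → A₁ → ℝ) (π₂ : S → A₂ → ℝ), IsPolicy π₁ → IsPolicy π₂ →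
      IsProbVec (dstat π₁ π₂) ∧ vmul (dstat π₁ π₂) (kernel P π₁ π₂) = dstat π₁ π₂)
    (I₂ : ℝ) (hI₂0 : 0 ≤ I₂)
    (hinfl : ∀ (π₁ : S → A₁ → ℝ) (π₂ π₂' : S → A₂ → ℝ),
      IsPolicy π₁ → IsPolicy π₂ → IsPolicy π₂' →
      kdist (kernel P π₁ π₂) (kernel P π₁ π₂') ≤ I₂ * pdist π₂ π₂')
    (ρ₁ ρ₂ : ℝ)
    (π₁t π₁p : S → A₁ → ℝ) (hπ₁t : IsPolicy π₁t) (hπ₁p : IsPolicy π₁p)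
    (π₂t π₂p : S → A₂ → ℝ) (hπ₂t : IsPolicy π₂t) (hπ₂p : IsPolicy π₂p)
    (hρ₁ : pdist π₁t π₁p ≤ ρ₁) (hρ₂ : pdist π₂t π₂p ≤ ρ₂) :
    l1 (fun s => dstat π₁t π₂t s - dstat π₁p π₂p s) ≤ (ρ₁ + I₂ * ρ₂) / (1 - γ) ∧
    ∀ π₁ : S → A₁ → ℝ, IsPolicy π₁ →
      l1 (fun s => dstat π₁ π₂t s - dstat π₁ π₂p s) ≤ I₂ * ρ₂ / (1 - γ) :=
  stmt_5_general P hP γ hγ1 hcontr dstat hdstat I₂ hI₂0 hinfl ρ₁ ρ₂ π₁t π₁p hπ₁t hπ₁p π₂t π₂p hπ₂t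
    hπ₂p hρ₁ hρ₂
end

section
/- Fix a policy π² of agent 2 and define r̄(s,a¹) = ∑_{a²} π²(s,a²) · r(s,a¹,a²) and P_{π²}(s,a¹,s') = ∑_{a²} π²(s,a²) · P(s,a¹,a²,s'). Let π and π_t be agent-1 policies whose induced kernels P_{π,π²} and P_{π_t,π²} have stationary distributions d_{π,π²} and d_{π_t,π²}, and set η(π') = ∑_s d_{π',π²}(s) · ∑_{a¹} π'(s,a¹) · r̄(s,a¹) for π' ∈ {π, π_t}. Suppose Q : S × A₁ → ℝ satisfies the Bellman equation Q(s,a¹) = r̄(s,a¹) − η(π_t) + ∑_{s'} P_{π²}(s,a¹,s') · Q^{π_t}(s') for all (s,a¹), where Q^{π'}(s) = ∑_{a¹} π'(s,a¹) · Q(s,a¹). Then η(π) − η(π_t) = ∑_s d_{π,π²}(s) · (Q^{π}(s) − Q^{π_t}(s)). -/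
/-!
Averaging agent 2 out turns the game into a single-agent MDP with reward r̄ and kernel P_{π²}.
There, averaging the Bellman equation for `Q` over `π` and then over `d_π` gives
E_{d_π}[Q^π] = η(π) − η(π_t) + E_{d_π}[P_π Q^{π_t}], and stationarity of `d_π` turns the last term
into E_{d_π}[Q^{π_t}].
-/

open Finset Matrix

theorem sum_mul_sum_kernel_of_vmul_eq {S : Type*} [Fintype S] {d : S → ℝ} {K : S → S → ℝ}
    (hd : vmul d K = d) (V : S → ℝ) :
    ∑ s, d s * ∑ s', K s s' * V s' = ∑ s, d s * V s := by
  change d ⬝ᵥ (Matrix.of K *ᵥ V) = d ⬝ᵥ V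
  rw [dotProduct_mulVec]
  exact congrArg (· ⬝ᵥ V) hd

theorem kernel_eq_sum_mul_marginal {S A₁ A₂ : Type*} [Fintype A₁] [Fintype A₂]
    (P : S → A₁ → A₂ → S → ℝ) (π₁ : S → A₁ → ℝ) (π₂ : S → A₂ → ℝ) (s s' : S) :
    kernel P π₁ π₂ s s' = ∑ a₁, π₁ s a₁ * ∑ a₂, π₂ s a₂ * P s a₁ a₂ s' := by
  simp only [kernel, mul_sum, mul_assoc]

theorem sum_mul_sub_add_of_sum_eq_one {A : Type*} [Fintype A] {p : A → ℝ} (hp : ∑ a, p a = 1)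
    (ρ x : A → ℝ) (η : ℝ) :
    ∑ a, p a * (ρ a - η + x a) = ∑ a, p a * ρ a - η + ∑ a, p a * x a := by
  simp only [mul_add, mul_sub, sum_add_distrib, sum_sub_distrib, ← sum_mul, hp, one_mul]

theorem gain_sub_eq_sum_stationary_mul_advantage {S A : Type*} [Fintype S] [Fintype A]
    {ρ : S → A → ℝ} {M : S → A → S → ℝ} {π : S → A → ℝ} {d : S → ℝ} {Q : S → A → ℝ}
    {V : S → ℝ} {η : ℝ} (hπ : ∀ s, ∑ a, π s a = 1) (hd : ∑ s, d s = 1)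
    (hstat : vmul d (fun s s' => ∑ a, π s a * M s a s') = d)
    (hQ : ∀ s a, Q s a = ρ s a - η + ∑ s', M s a s' * V s') :
    ∑ s, d s * ∑ a, π s a * ρ s a - η = ∑ s, d s * (∑ a, π s a * Q s a - V s) := by
  have hQπ : ∀ s, ∑ a, π s a * Q s a
      = ∑ a, π s a * ρ s a - η + ∑ s', (∑ a, π s a * M s a s') * V s' := by
    intro s
    simp only [hQ, sum_mul_sub_add_of_sum_eq_one (hπ s), mul_sum, sum_mul, mul_assoc]
    rw [sum_comm]
  have hVd := sum_mul_sum_kernel_of_vmul_eq hstat V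
  simp only [hQπ, mul_sub, mul_add, sum_add_distrib, sum_sub_distrib, ← sum_mul, hd, one_mul,
    hVd]
  ring

theorem stmt_8_general {S A₁ A₂ : Type*} [Fintype S]
    [Fintype A₁] [Fintype A₂]
    (P : S → A₁ → A₂ → S → ℝ)
    (r : S → A₁ → A₂ → ℝ)
    (π₂ : S → A₂ → ℝ)
    (π πt : S → A₁ → ℝ) (hπ : IsPolicy π)
    (dπ dπt : S → ℝ)
    (hdπ : IsProbVec dπ) (hdπstat : vmul dπ (kernel P π π₂) = dπ)
    (Q : S → A₁ → ℝ)
    (hQ : ∀ s a₁, Q s a₁ =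
      (∑ a₂, π₂ s a₂ * r s a₁ a₂)
      - (∑ s', dπt s' * ∑ a₁', πt s' a₁' * ∑ a₂, π₂ s' a₂ * r s' a₁' a₂)
      + ∑ s', (∑ a₂, π₂ s a₂ * P s a₁ a₂ s') * (∑ a₁', πt s' a₁' * Q s' a₁')) :
    (∑ s, dπ s * ∑ a₁, π s a₁ * ∑ a₂, π₂ s a₂ * r s a₁ a₂)
      - (∑ s, dπt s * ∑ a₁, πt s a₁ * ∑ a₂, π₂ s a₂ * r s a₁ a₂)
    = ∑ s, dπ s * ((∑ a₁, π s a₁ * Q s a₁) - (∑ a₁, πt s a₁ * Q s a₁)) := by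
  have hstat : vmul dπ (fun s s' => ∑ a₁, π s a₁ * ∑ a₂, π₂ s a₂ * P s a₁ a₂ s') = dπ := by
    simpa only [← kernel_eq_sum_mul_marginal] using hdπstat
  exact gain_sub_eq_sum_stationary_mul_advantage (fun s => (hπ s).2) hdπ.2 hstat hQ

/-- performance-difference identity: with r̄(s,a₁) = ∑_{a₂} π₂(s,a₂)r(s,a₁,a₂),
P_{π₂}(s,a₁,s') = ∑_{a₂} π₂(s,a₂)P(s,a₁,a₂,s'), stationary distributions d_{π,π₂}, d_{πt,π₂},
average rewards η(π') = ∑_s d_{π',π₂}(s)·∑_{a₁} π'(s,a₁)·r̄(s,a₁), and Q satisfying the Bellman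
equation w.r.t. πt, one has η(π) − η(πt) = ∑_s d_{π,π₂}(s)·(Q^π(s) − Q^{πt}(s)). -/
theorem stmt_8 {S A₁ A₂ : Type*} [Fintype S] [Nonempty S]
    [Fintype A₁] [Nonempty A₁] [Fintype A₂] [Nonempty A₂]
    (P : S → A₁ → A₂ → S → ℝ) (hP : ∀ s a₁ a₂, IsProbVec (P s a₁ a₂))
    (r : S → A₁ → A₂ → ℝ) (hr : ∀ s a₁ a₂, 0 ≤ r s a₁ a₂ ∧ r s a₁ a₂ ≤ 1)
    (π₂ : S → A₂ → ℝ) (hπ₂ : IsPolicy π₂)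
    (π πt : S → A₁ → ℝ) (hπ : IsPolicy π) (hπt : IsPolicy πt)
    (dπ dπt : S → ℝ)
    (hdπ : IsProbVec dπ) (hdπstat : vmul dπ (kernel P π π₂) = dπ)
    (hdπt : IsProbVec dπt) (hdπtstat : vmul dπt (kernel P πt π₂) = dπt)
    (Q : S → A₁ → ℝ)
    (hQ : ∀ s a₁, Q s a₁ =
      (∑ a₂, π₂ s a₂ * r s a₁ a₂)
      - (∑ s', dπt s' * ∑ a₁', πt s' a₁' * ∑ a₂, π₂ s' a₂ * r s' a₁' a₂)
      + ∑ s', (∑ a₂, π₂ s a₂ * P s a₁ a₂ s') * (∑ a₁', πt s' a₁' * Q s' a₁')) :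
    (∑ s, dπ s * ∑ a₁, π s a₁ * ∑ a₂, π₂ s a₂ * r s a₁ a₂)
      - (∑ s, dπt s * ∑ a₁, πt s a₁ * ∑ a₂, π₂ s a₂ * r s a₁ a₂)
    = ∑ s, dπ s * ((∑ a₁, π s a₁ * Q s a₁) - (∑ a₁, πt s a₁ * Q s a₁)) :=
  stmt_8_general P r π₂ π πt hπ dπ dπt hdπ hdπstat Q hQ
end

section
/- Fix γ ∈ [0,1); assume every induced kernel P_{π¹,π²} is γ-contractive with stationary distribution d_{π¹,π²}, and let I₂ ≥ 0 satisfy ‖P_{π¹,π²} − P_{π¹,π²'}‖_∞ ≤ I₂ · ‖π² − π²'‖_∞ for all policies. For a policy pair (π¹,π²), let g_{π¹,π²}(s) = ∑_{a¹,a²} π¹(s,a¹)π²(s,a²)r(s,a¹,a²), let η(π¹,π²) = ∑_s d_{π¹,π²}(s) · g_{π¹,π²}(s), and let h_{π¹,π²}(s) = ∑_{m=0}^{∞} ((e_s ⬝ P_{π¹,π²}^m) · g_{π¹,π²} − η(π¹,π²)) be the bias (value) vector. If (π¹_t, π²_t) and (π¹_{t−1}, π²_{t−1}) satisfy ‖π¹_t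 − π¹_{t−1}‖_∞ ≤ ρ₁ and ‖π²_t − π²_{t−1}‖_∞ ≤ ρ₂, then max_s |h_{π¹_t,π²_t}(s) − h_{π¹_{t−1},π²_{t−1}}(s)| ≤ 3·(ρ₁ + I₂·ρ₂)/(1 − γ)² + 2·(ρ₁ + ρ₂)/(1 − γ). -/
/-- `iter d K m = d ⬝ K^m`. -/
def iter {S : Type*} [Fintype S] (d : S → ℝ) (K : S → S → ℝ) : ℕ → S → ℝ
  | 0 => d
  | m + 1 => vmul (iter d K m) K

/-- Dot product x · v = ∑ s, x s · v s. -/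
def dot {S : Type*} [Fintype S] (x v : S → ℝ) : ℝ := ∑ s, x s * v s

/-- The point-mass probability vector at `s`. -/
def pm {S : Type*} [DecidableEq S] (s : S) : S → ℝ := fun s' => if s' = s then 1 else 0

/-- Expected one-step reward g_{π₁,π₂}(s) = ∑_{a₁,a₂} π₁(s,a₁)π₂(s,a₂)r(s,a₁,a₂). -/
def gfun {S A₁ A₂ : Type*} [Fintype A₁] [Fintype A₂]
    (r : S → A₁ → A₂ → ℝ) (π₁ : S → A₁ → ℝ) (π₂ : S → A₂ → ℝ) : S → ℝ :=
  fun s => ∑ a₁, ∑ a₂, π₁ s a₁ * π₂ s a₂ * r s a₁ a₂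

/-- Average reward η(π₁,π₂) = ∑_s d_{π₁,π₂}(s)·g_{π₁,π₂}(s). -/
def eta {S A₁ A₂ : Type*} [Fintype S] [Fintype A₁] [Fintype A₂]
    (r : S → A₁ → A₂ → ℝ) (dstat : (S → A₁ → ℝ) → (S → A₂ → ℝ) → S → ℝ)
    (π₁ : S → A₁ → ℝ) (π₂ : S → A₂ → ℝ) : ℝ :=
  ∑ s, dstat π₁ π₂ s * gfun r π₁ π₂ s

/-- Bias (value) vector h_{π₁,π₂}(s) = ∑_{m≥0} ((e_s ⬝ P_{π₁,π₂}^m)·g_{π₁,π₂} − η(π₁,π₂)). -/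
noncomputable def bias {S A₁ A₂ : Type*} [Fintype S] [DecidableEq S] [Fintype A₁] [Fintype A₂]
    (P : S → A₁ → A₂ → S → ℝ) (r : S → A₁ → A₂ → ℝ)
    (dstat : (S → A₁ → ℝ) → (S → A₂ → ℝ) → S → ℝ)
    (π₁ : S → A₁ → ℝ) (π₂ : S → A₂ → ℝ) : S → ℝ :=
  fun s => ∑' m : ℕ,
    (dot (iter (pm s) (kernel P π₁ π₂) m) (gfun r π₁ π₂) - eta r dstat π₁ π₂)

namespace Stmt12Aux

open Finset

set_option linter.unusedSectionVars false

variable {S : Type*} [Fintype S] [Nonempty S] [DecidableEq S]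

lemma fmax_le {f : S → ℝ} {c : ℝ} (h : ∀ s, f s ≤ c) : fmax f ≤ c :=
  Finset.sup'_le _ _ fun s _ => h s

lemma le_fmax (f : S → ℝ) (s : S) : f s ≤ fmax f :=
  Finset.le_sup' f (Finset.mem_univ s)

lemma le_kdist (K K' : S → S → ℝ) (s : S) : ∑ t, |K s t - K' s t| ≤ kdist K K' :=
  le_fmax (fun s => ∑ t, |K s t - K' s t|) s

lemma kdist_le {K K' : S → S → ℝ} {c : ℝ} (h : ∀ s, ∑ t, |K s t - K' s t| ≤ c) :
    kdist K K' ≤ c := fmax_le h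

lemma le_pdist {A : Type*} [Fintype A] (π π' : S → A → ℝ) (s : S) :
    ∑ a, |π s a - π' s a| ≤ pdist π π' :=
  le_fmax (fun s => ∑ a, |π s a - π' s a|) s

lemma l1_nonneg (x : S → ℝ) : 0 ≤ l1 x := Finset.sum_nonneg fun _ _ => abs_nonneg _

lemma kdist_nonneg (K K' : S → S → ℝ) : 0 ≤ kdist K K' :=
  le_trans (Finset.sum_nonneg fun _ _ => abs_nonneg _) (le_kdist K K' (Classical.arbitrary S))

lemma pdist_nonneg {A : Type*} [Fintype A] (π π' : S → A → ℝ) : 0 ≤ pdist π π' :=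
  le_trans (Finset.sum_nonneg fun _ _ => abs_nonneg _) (le_pdist π π' (Classical.arbitrary S))

lemma kdist_triangle (K K' K'' : S → S → ℝ) :
    kdist K K'' ≤ kdist K K' + kdist K' K'' := by
  refine kdist_le fun s => ?_
  calc ∑ t, |K s t - K'' s t| ≤ ∑ t, (|K s t - K' s t| + |K' s t - K'' s t|) :=
        Finset.sum_le_sum fun t _ => by
          have := abs_sub_le (K s t) (K' s t) (K'' s t); linarith
    _ = (∑ t, |K s t - K' s t|) + ∑ t, |K' s t - K'' s t| := Finset.sum_add_distrib
    _ ≤ kdist K K' + kdist K' K'' := add_le_add (le_kdist _ _ s) (le_kdist _ _ s)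

lemma l1_add_le (x y : S → ℝ) : l1 (fun s => x s + y s) ≤ l1 x + l1 y := by
  rw [l1, l1, l1, ← Finset.sum_add_distrib]
  exact Finset.sum_le_sum fun s _ => abs_add_le _ _

lemma l1_smul (a : ℝ) (x : S → ℝ) : l1 (fun s => a * x s) = |a| * l1 x := by
  simp [l1, abs_mul, Finset.mul_sum]

lemma l1_prob {d : S → ℝ} (hd : IsProbVec d) : l1 d = 1 := by
  rw [l1, ← hd.2]; exact Finset.sum_congr rfl fun s _ => abs_of_nonneg (hd.1 s)

lemma l1_sub_le_two {d d' : S → ℝ} (hd : IsProbVec d) (hd' : IsProbVec d') :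
    l1 (fun s => d s - d' s) ≤ 2 := by
  calc l1 (fun s => d s - d' s) ≤ l1 d + l1 (fun s => -d' s) :=
        l1_add_le d (fun s => -d' s)
    _ = l1 d + l1 d' := by simp [l1]
    _ ≤ 2 := by rw [l1_prob hd, l1_prob hd']; norm_num

lemma vmul_sub (x y : S → ℝ) (K : S → S → ℝ) :
    vmul (fun s => x s - y s) K = fun t => vmul x K t - vmul y K t := by
  funext t; simp [vmul, sub_mul, Finset.sum_sub_distrib]

lemma sum_vmul (x : S → ℝ) (K : S → S → ℝ) (hK : ∀ s, ∑ t, K s t = 1) :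
    ∑ t, vmul x K t = ∑ s, x s := by
  simp only [vmul]
  rw [Finset.sum_comm]
  exact Finset.sum_congr rfl fun s _ => by rw [← Finset.mul_sum, hK s, mul_one]

lemma l1_vmul_sub_kernels (x : S → ℝ) (K K' : S → S → ℝ) :
    l1 (fun t => vmul x K t - vmul x K' t) ≤ l1 x * kdist K K' := by
  calc l1 (fun t => vmul x K t - vmul x K' t)
      = ∑ t, |∑ s, x s * (K s t - K' s t)| := by
        simp [l1, vmul, mul_sub, Finset.sum_sub_distrib]
    _ ≤ ∑ t, ∑ s, |x s| * |K s t - K' s t| := by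
        refine Finset.sum_le_sum fun t _ => ?_
        refine le_trans (Finset.abs_sum_le_sum_abs _ _) ?_
        exact Finset.sum_le_sum fun s _ => by rw [abs_mul]
    _ = ∑ s, |x s| * ∑ t, |K s t - K' s t| := by
        rw [Finset.sum_comm]; simp [Finset.mul_sum]
    _ ≤ ∑ s, |x s| * kdist K K' := by
        refine Finset.sum_le_sum fun s _ => ?_
        exact mul_le_mul_of_nonneg_left (le_kdist _ _ s) (abs_nonneg _)
    _ = l1 x * kdist K K' := by rw [l1, Finset.sum_mul]

/-- Contractivity extends to zero-sum vectors. -/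
lemma contract_zero {γ : ℝ} (hγ0 : 0 ≤ γ) {K : S → S → ℝ} (hc : Contractive γ K)
    (x : S → ℝ) (hx : ∑ s, x s = 0) : l1 (vmul x K) ≤ γ * l1 x := by
  set p : S → ℝ := fun s => max (x s) 0 with hp
  set n : S → ℝ := fun s => max (-x s) 0 with hn
  have hpn : ∀ s, x s = p s - n s := fun s => by
    simp only [hp, hn]; rcases le_total (x s) 0 with h | h <;>
      [rw [max_eq_right h, max_eq_left (by linarith)]; rw [max_eq_left h, max_eq_right (by linarith)]] <;> ring
  have hsum : ∑ s, p s = ∑ s, n s := by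
    have h' : ∑ s, (p s - n s) = 0 := by
      rw [← hx]; exact Finset.sum_congr rfl fun s _ => (hpn s).symm
    rw [Finset.sum_sub_distrib] at h'; linarith
  rcases eq_or_lt_of_le (Finset.sum_nonneg (fun s _ => le_max_right (x s) 0) :
      (0:ℝ) ≤ ∑ s, p s) with h0 | h0
  · -- x = 0
    have hp0 : ∀ s, p s = 0 := fun s =>
      (Finset.sum_eq_zero_iff_of_nonneg (fun s _ => le_max_right (x s) 0)).mp h0.symm
        s (Finset.mem_univ s)
    have hn0 : ∀ s, n s = 0 := fun s =>
      (Finset.sum_eq_zero_iff_of_nonneg (fun s _ => le_max_right (-x s) 0)).mp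
        (by rw [← hsum]; exact h0.symm) s (Finset.mem_univ s)
    have hx0 : ∀ s, x s = 0 := fun s => by rw [hpn s, hp0 s, hn0 s, sub_zero]
    have hv : vmul x K = fun _ => 0 := by
      funext t; exact Finset.sum_eq_zero fun s _ => by rw [hx0 s, zero_mul]
    rw [hv]
    have hz : l1 (fun _ : S => (0:ℝ)) = 0 := by simp [l1]
    rw [hz]
    exact mul_nonneg hγ0 (l1_nonneg x)
  · set c : ℝ := ∑ s, p s with hcdef
    have hcne : c ≠ 0 := ne_of_gt h0
    have hd : IsProbVec (fun s => p s / c) := by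
      refine ⟨fun s => div_nonneg (le_max_right _ _) h0.le, ?_⟩
      rw [← Finset.sum_div]; exact div_self hcne
    have hd' : IsProbVec (fun s => n s / c) := by
      refine ⟨fun s => div_nonneg (le_max_right _ _) h0.le, ?_⟩
      rw [← Finset.sum_div, ← hsum]; exact div_self hcne
    have key := hc _ _ hd hd'
    have e1 : (fun t => vmul (fun s => p s / c) K t - vmul (fun s => n s / c) K t)
        = fun t => c⁻¹ * vmul x K t := by
      funext t; simp only [vmul, div_eq_inv_mul, Finset.mul_sum, ← Finset.sum_sub_distrib]
      refine Finset.sum_congr rfl fun s _ => ?_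
      rw [hpn s]; ring
    have e2 : (fun s => p s / c - n s / c) = fun s => c⁻¹ * x s := by
      funext s; rw [hpn s]; field_simp
    rw [e1, e2, l1_smul, l1_smul, abs_of_nonneg (inv_nonneg.mpr h0.le)] at key
    have := mul_le_mul_of_nonneg_left key h0.le
    rw [← mul_assoc, ← mul_assoc, mul_inv_cancel₀ hcne, one_mul] at this
    calc l1 (vmul x K) ≤ c * γ * (c⁻¹ * l1 x) := this
      _ = γ * l1 x := by field_simp

lemma sum_iter (x : S → ℝ) (K : S → S → ℝ) (hK : ∀ s, ∑ t, K s t = 1) (m : ℕ) :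
    ∑ t, iter x K m t = ∑ s, x s := by
  induction m with
  | zero => rfl
  | succ m ih => rw [iter, sum_vmul _ _ hK, ih]

lemma l1_iter_zero {γ : ℝ} (hγ0 : 0 ≤ γ) {K : S → S → ℝ} (hc : Contractive γ K)
    (hK : ∀ s, ∑ t, K s t = 1)
    (x : S → ℝ) (hx : ∑ s, x s = 0) (m : ℕ) : l1 (iter x K m) ≤ γ ^ m * l1 x := by
  induction m with
  | zero => simp [iter]
  | succ m ih =>
      rw [iter]
      calc l1 (vmul (iter x K m) K) ≤ γ * l1 (iter x K m) :=
            contract_zero hγ0 hc _ (by rw [sum_iter _ _ hK, hx])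
        _ ≤ γ * (γ ^ m * l1 x) := mul_le_mul_of_nonneg_left ih hγ0
        _ = γ ^ (m + 1) * l1 x := by ring

lemma iter_stat {d : S → ℝ} {K : S → S → ℝ} (hds : vmul d K = d) (m : ℕ) :
    iter d K m = d := by
  induction m with
  | zero => rfl
  | succ m ih => rw [iter, ih, hds]

lemma iter_sub (x y : S → ℝ) (K : S → S → ℝ) (m : ℕ) :
    iter (fun s => x s - y s) K m = fun t => iter x K m t - iter y K m t := by
  induction m with
  | zero => rfl
  | succ m ih => rw [iter, ih, vmul_sub]; rfl

lemma abs_dot_le (x v : S → ℝ) {C : ℝ} (hv : ∀ s, |v s| ≤ C) : |dot x v| ≤ l1 x * C := by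
  calc |dot x v| ≤ ∑ s, |x s * v s| := Finset.abs_sum_le_sum_abs _ _
    _ ≤ ∑ s, |x s| * C := Finset.sum_le_sum fun s _ => by
        rw [abs_mul]; exact mul_le_mul_of_nonneg_left (hv s) (abs_nonneg _)
    _ = l1 x * C := by rw [l1, Finset.sum_mul]

lemma dot_sub_left (x y v : S → ℝ) :
    dot (fun s => x s - y s) v = dot x v - dot y v := by
  simp [dot, sub_mul, Finset.sum_sub_distrib]
lemma pm_prob (s : S) : IsProbVec (pm s) := by
  constructor
  · intro t; simp only [pm]; split <;> norm_num
  · simp [pm]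

/-- The key recursive bound on ‖e K^m − d − (e K'^m − d')‖₁. -/
lemma l1_diff_bound {γ Δ : ℝ} (hγ0 : 0 ≤ γ) {K K' : S → S → ℝ}
    (hKrow : ∀ s, ∑ t, K s t = 1) (hK'row : ∀ s, ∑ t, K' s t = 1)
    (hcK : Contractive γ K) (hcK' : Contractive γ K')
    {d d' e : S → ℝ} (hd : IsProbVec d) (hd' : IsProbVec d') (he : IsProbVec e)
    (hds : vmul d K = d) (hds' : vmul d' K' = d')
    (hΔ : kdist K K' ≤ Δ) (m : ℕ) :
    l1 (fun t => (iter e K m t - d t) - (iter e K' m t - d' t)) ≤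
      2 * Δ * ((m : ℝ) * γ ^ (m - 1)) + γ ^ m * l1 (fun t => d t - d' t) := by
  have hΔ0 : 0 ≤ Δ := le_trans (kdist_nonneg K K') hΔ
  induction m with
  | zero =>
      have h0 : (fun t => (iter e K 0 t - d t) - (iter e K' 0 t - d' t))
          = fun t => d' t - d t := by funext t; show (e t - d t) - (e t - d' t) = _; ring
      rw [h0]
      have h1 : l1 (fun t => d' t - d t) = l1 (fun t => d t - d' t) := by
        simp only [l1]; exact Finset.sum_congr rfl fun t _ => abs_sub_comm _ _
      rw [h1]; simp
  | succ m ih =>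
      have hdt : ∀ t, (∑ u, d u * K u t) = d t := fun t => congrFun hds t
      have hdt' : ∀ t, (∑ u, d' u * K' u t) = d' t := fun t => congrFun hds' t
      have step : ∀ t, (iter e K (m+1) t - d t) - (iter e K' (m+1) t - d' t)
          = vmul (fun u => (iter e K m u - d u) - (iter e K' m u - d' u)) K t
            + (vmul (fun u => iter e K' m u - d' u) K t
               - vmul (fun u => iter e K' m u - d' u) K' t) := by
        intro t
        simp only [iter, vmul, sub_mul, Finset.sum_sub_distrib]
        rw [← hdt t, ← hdt' t]
        ring
      have hfe : (fun t => (iter e K (m+1) t - d t) - (iter e K' (m+1) t - d' t))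
          = fun t => vmul (fun u => (iter e K m u - d u) - (iter e K' m u - d' u)) K t
            + (vmul (fun u => iter e K' m u - d' u) K t
               - vmul (fun u => iter e K' m u - d' u) K' t) := funext step
      rw [hfe]
      have hsumzero : ∑ u, ((iter e K m u - d u) - (iter e K' m u - d' u)) = 0 := by
        simp only [Finset.sum_sub_distrib]
        rw [sum_iter _ _ hKrow, sum_iter _ _ hK'row, hd.2, hd'.2, he.2]
        ring
      have hB : iter (fun u => e u - d' u) K' m = fun u => iter e K' m u - d' u := by
        rw [iter_sub, iter_stat hds']
      have hBzero : ∑ u, (e u - d' u) = 0 := by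
        rw [Finset.sum_sub_distrib, he.2, hd'.2]; ring
      have hl1B : l1 (fun u => iter e K' m u - d' u) ≤ γ ^ m * 2 := by
        rw [← hB]
        exact le_trans (l1_iter_zero hγ0 hcK' hK'row _ hBzero m)
          (mul_le_mul_of_nonneg_left (l1_sub_le_two he hd') (pow_nonneg hγ0 m))
      calc l1 (fun t => vmul (fun u => (iter e K m u - d u) - (iter e K' m u - d' u)) K t
            + (vmul (fun u => iter e K' m u - d' u) K t
               - vmul (fun u => iter e K' m u - d' u) K' t))
          ≤ l1 (vmul (fun u => (iter e K m u - d u) - (iter e K' m u - d' u)) K)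
            + l1 (fun t => vmul (fun u => iter e K' m u - d' u) K t
               - vmul (fun u => iter e K' m u - d' u) K' t) := l1_add_le _ _
        _ ≤ γ * l1 (fun u => (iter e K m u - d u) - (iter e K' m u - d' u))
            + (γ ^ m * 2) * Δ := by
            refine add_le_add (contract_zero hγ0 hcK _ hsumzero) ?_
            exact le_trans (l1_vmul_sub_kernels _ K K')
              (mul_le_mul hl1B hΔ (kdist_nonneg K K') (by positivity))
        _ ≤ γ * (2 * Δ * ((m : ℝ) * γ ^ (m - 1)) + γ ^ m * l1 (fun t => d t - d' t))
            + (γ ^ m * 2) * Δ :=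
            add_le_add (mul_le_mul_of_nonneg_left ih hγ0) le_rfl
        _ ≤ 2 * Δ * (((m : ℝ) + 1) * γ ^ m) + γ ^ (m + 1) * l1 (fun t => d t - d' t) := by
            have hmg : (m : ℝ) * (γ * γ ^ (m - 1)) ≤ (m : ℝ) * γ ^ m := by
              cases m with
              | zero => simp
              | succ k =>
                  rw [Nat.add_sub_cancel]
                  exact le_of_eq (by rw [pow_succ]; ring)
            have hpow : γ * γ ^ m = γ ^ (m + 1) := by rw [pow_succ]; ring
            nlinarith [l1_nonneg (fun t => d t - d' t), pow_nonneg hγ0 m,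
              mul_le_mul_of_nonneg_left hmg (mul_nonneg (by norm_num : (0:ℝ) ≤ 2) hΔ0)]
        _ = 2 * Δ * (((m + 1 : ℕ) : ℝ) * γ ^ (m + 1 - 1)) +
              γ ^ (m + 1) * l1 (fun t => d t - d' t) := by push_cast; ring_nf
/-- Closeness of stationary distributions. -/
lemma dstat_close {γ Δ : ℝ} (hγ0 : 0 ≤ γ) (hγ1 : γ < 1) {K K' : S → S → ℝ}
    (hcK : Contractive γ K)
    {d d' : S → ℝ} (hd : IsProbVec d) (hd' : IsProbVec d')
    (hds : vmul d K = d) (hds' : vmul d' K' = d')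
    (hΔ : kdist K K' ≤ Δ) :
    l1 (fun t => d t - d' t) ≤ Δ / (1 - γ) := by
  have h1γ : (0:ℝ) < 1 - γ := by linarith
  have hid : ∀ t, d t - d' t
      = vmul (fun u => d u - d' u) K t + (vmul d' K t - vmul d' K' t) := by
    intro t
    have h := congrFun hds t
    have h' := congrFun hds' t
    simp only [vmul, sub_mul, Finset.sum_sub_distrib]
    simp only [vmul] at h h'
    rw [h, h']
    ring
  have hz : ∑ u, (d u - d' u) = 0 := by
    rw [Finset.sum_sub_distrib, hd.2, hd'.2]; ring
  have hbound : l1 (fun t => d t - d' t) ≤ γ * l1 (fun t => d t - d' t) + Δ := by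
    calc l1 (fun t => d t - d' t)
        = l1 (fun t => vmul (fun u => d u - d' u) K t + (vmul d' K t - vmul d' K' t)) :=
          congrArg l1 (funext hid)
      _ ≤ l1 (vmul (fun u => d u - d' u) K) + l1 (fun t => vmul d' K t - vmul d' K' t) :=
          l1_add_le _ _
      _ ≤ γ * l1 (fun t => d t - d' t) + Δ := by
          refine add_le_add (contract_zero hγ0 hcK _ hz) ?_
          calc l1 (fun t => vmul d' K t - vmul d' K' t) ≤ l1 d' * kdist K K' :=
                l1_vmul_sub_kernels d' K K'
            _ = kdist K K' := by rw [l1_prob hd', one_mul]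
            _ ≤ Δ := hΔ
  rw [le_div_iff₀ h1γ]
  nlinarith [l1_nonneg (fun t => d t - d' t)]

/-- Main abstract lemma: bound on the difference of bias values. -/
lemma key {γ Δ ε : ℝ} (hγ0 : 0 ≤ γ) (hγ1 : γ < 1) {K K' : S → S → ℝ}
    (hK : ∀ s, IsProbVec (K s)) (hK' : ∀ s, IsProbVec (K' s))
    (hcK : Contractive γ K) (hcK' : Contractive γ K')
    {d d' : S → ℝ} (hd : IsProbVec d) (hd' : IsProbVec d')
    (hds : vmul d K = d) (hds' : vmul d' K' = d')
    {g g' : S → ℝ} (hg : ∀ t, |g t| ≤ 1) (hg' : ∀ t, |g' t| ≤ 1)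
    (hΔ : kdist K K' ≤ Δ) (hε : ∀ t, |g t - g' t| ≤ ε) (s : S) :
    |(∑' m : ℕ, (dot (iter (pm s) K m) g - dot d g)) -
     (∑' m : ℕ, (dot (iter (pm s) K' m) g' - dot d' g'))| ≤
      3 * Δ / (1 - γ) ^ 2 + 2 * ε / (1 - γ) := by
  have h1γ : (0:ℝ) < 1 - γ := by linarith
  have hΔ0 : 0 ≤ Δ := le_trans (kdist_nonneg K K') hΔ
  have hε0 : 0 ≤ ε := le_trans (abs_nonneg _) (hε (Classical.arbitrary S))
  have hKrow : ∀ u, ∑ t, K u t = 1 := fun u => (hK u).2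
  have hK'row : ∀ u, ∑ t, K' u t = 1 := fun u => (hK' u).2
  have he : IsProbVec (pm s) := pm_prob s
  set e : S → ℝ := pm s with hedef
  set D₀ : ℝ := l1 (fun t => d t - d' t) with hD₀def
  have hD₀0 : 0 ≤ D₀ := l1_nonneg _
  have hD₀le : D₀ ≤ Δ / (1 - γ) := dstat_close hγ0 hγ1 hcK hd hd' hds hds' hΔ
  -- the terms of the two series
  set a : ℕ → ℝ := fun m => dot (iter e K m) g - dot d g with hadef
  set b : ℕ → ℝ := fun m => dot (iter e K' m) g' - dot d' g' with hbdef
  have hA : ∀ m, iter (fun t => e t - d t) K m = fun t => iter e K m t - d t := by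
    intro m; rw [iter_sub, iter_stat hds]
  have hB : ∀ m, iter (fun t => e t - d' t) K' m = fun t => iter e K' m t - d' t := by
    intro m; rw [iter_sub, iter_stat hds']
  have hzA : ∑ u, (e u - d u) = 0 := by
    rw [Finset.sum_sub_distrib, he.2, hd.2]; ring
  have hzB : ∑ u, (e u - d' u) = 0 := by
    rw [Finset.sum_sub_distrib, he.2, hd'.2]; ring
  have hl1A : ∀ m, l1 (fun t => iter e K m t - d t) ≤ 2 * γ ^ m := by
    intro m; rw [← hA m]
    calc l1 (iter (fun t => e t - d t) K m) ≤ γ ^ m * l1 (fun t => e t - d t) :=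
          l1_iter_zero hγ0 hcK hKrow _ hzA m
      _ ≤ γ ^ m * 2 := mul_le_mul_of_nonneg_left (l1_sub_le_two he hd) (pow_nonneg hγ0 m)
      _ = 2 * γ ^ m := by ring
  have hl1B : ∀ m, l1 (fun t => iter e K' m t - d' t) ≤ 2 * γ ^ m := by
    intro m; rw [← hB m]
    calc l1 (iter (fun t => e t - d' t) K' m) ≤ γ ^ m * l1 (fun t => e t - d' t) :=
          l1_iter_zero hγ0 hcK' hK'row _ hzB m
      _ ≤ γ ^ m * 2 := mul_le_mul_of_nonneg_left (l1_sub_le_two he hd') (pow_nonneg hγ0 m)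
      _ = 2 * γ ^ m := by ring
  have haeq : ∀ m, a m = dot (fun t => iter e K m t - d t) g := by
    intro m; rw [dot_sub_left]
  have hbeq : ∀ m, b m = dot (fun t => iter e K' m t - d' t) g' := by
    intro m; rw [dot_sub_left]
  have habs_a : ∀ m, |a m| ≤ 2 * γ ^ m := by
    intro m; rw [haeq m]
    calc |dot (fun t => iter e K m t - d t) g| ≤ l1 (fun t => iter e K m t - d t) * 1 :=
          abs_dot_le _ _ hg
      _ ≤ 2 * γ ^ m := by rw [mul_one]; exact hl1A m
  have habs_b : ∀ m, |b m| ≤ 2 * γ ^ m := by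
    intro m; rw [hbeq m]
    calc |dot (fun t => iter e K' m t - d' t) g'| ≤ l1 (fun t => iter e K' m t - d' t) * 1 :=
          abs_dot_le _ _ hg'
      _ ≤ 2 * γ ^ m := by rw [mul_one]; exact hl1B m
  have hγn : ‖γ‖ < 1 := by rw [Real.norm_eq_abs, abs_of_nonneg hγ0]; exact hγ1
  have hgeo : HasSum (fun n : ℕ => γ ^ n) (1 - γ)⁻¹ := hasSum_geometric_of_lt_one hγ0 hγ1
  have hsgeo : Summable (fun n : ℕ => (2:ℝ) * γ ^ n) := (hgeo.summable.mul_left 2)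
  have hsa : Summable a := by
    refine summable_abs_iff.mp (Summable.of_nonneg_of_le (fun m => abs_nonneg _) habs_a hsgeo)
  have hsb : Summable b := by
    refine summable_abs_iff.mp (Summable.of_nonneg_of_le (fun m => abs_nonneg _) habs_b hsgeo)
  -- per-term bound
  set c : ℕ → ℝ := fun m => 2 * ε * γ ^ m + (2 * Δ * ((m : ℝ) * γ ^ (m - 1)) + γ ^ m * D₀)
    with hcdef
  have hab : ∀ m, |a m - b m| ≤ c m := by
    intro m
    have hsplit : a m - b m = dot (fun t => iter e K m t - d t) (fun t => g t - g' t)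
        + dot (fun t => (iter e K m t - d t) - (iter e K' m t - d' t)) g' := by
      rw [haeq m, hbeq m]
      simp only [dot, sub_mul, mul_sub, Finset.sum_sub_distrib, ← Finset.sum_add_distrib]
      ring
    rw [hsplit]
    calc |dot (fun t => iter e K m t - d t) (fun t => g t - g' t)
        + dot (fun t => (iter e K m t - d t) - (iter e K' m t - d' t)) g'|
        ≤ |dot (fun t => iter e K m t - d t) (fun t => g t - g' t)|
          + |dot (fun t => (iter e K m t - d t) - (iter e K' m t - d' t)) g'| := abs_add_le _ _
      _ ≤ l1 (fun t => iter e K m t - d t) * ε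
          + l1 (fun t => (iter e K m t - d t) - (iter e K' m t - d' t)) * 1 :=
          add_le_add (abs_dot_le _ _ hε) (abs_dot_le _ _ hg')
      _ ≤ (2 * γ ^ m) * ε + (2 * Δ * ((m : ℝ) * γ ^ (m - 1)) + γ ^ m * D₀) := by
          refine add_le_add (mul_le_mul_of_nonneg_right (hl1A m) hε0) ?_
          rw [mul_one]
          exact l1_diff_bound hγ0 hKrow hK'row hcK hcK' hd hd' he hds hds' hΔ m
      _ = c m := by rw [hcdef]; ring
  -- summability of the bound
  have hmulgeo : HasSum (fun n : ℕ => (n : ℝ) * γ ^ n) (γ / (1 - γ) ^ 2) :=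
    hasSum_coe_mul_geometric_of_norm_lt_one hγn
  have hsucc : HasSum (fun k : ℕ => ((k : ℝ) + 1) * γ ^ k) (γ / (1 - γ) ^ 2 + (1 - γ)⁻¹) := by
    have h := hmulgeo.add hgeo
    have hfe : (fun k : ℕ => ((k : ℝ) + 1) * γ ^ k)
        = fun k : ℕ => (k : ℝ) * γ ^ k + γ ^ k := by funext k; ring
    rw [hfe]; exact h
  have hshift : HasSum (fun m : ℕ => (m : ℝ) * γ ^ (m - 1))
      (γ / (1 - γ) ^ 2 + (1 - γ)⁻¹) := by
    have hfe : (fun n : ℕ => ((n + 1 : ℕ) : ℝ) * γ ^ ((n + 1) - 1))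
        = fun k : ℕ => ((k : ℝ) + 1) * γ ^ k := by
      funext k; rw [Nat.add_sub_cancel]; push_cast; ring
    have h2 := (hasSum_nat_add_iff (f := fun m : ℕ => (m : ℝ) * γ ^ (m - 1)) 1).mp
      (by rw [show (fun n : ℕ => ((n + 1 : ℕ) : ℝ) * γ ^ ((n + 1) - 1))
            = fun k : ℕ => ((k : ℝ) + 1) * γ ^ k from hfe]; exact hsucc)
    simpa using h2
  have hsumc : HasSum c (2 * ε * (1 - γ)⁻¹
      + (2 * Δ * (γ / (1 - γ) ^ 2 + (1 - γ)⁻¹) + (1 - γ)⁻¹ * D₀)) := by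
    have h1 : HasSum (fun m : ℕ => 2 * ε * γ ^ m) (2 * ε * (1 - γ)⁻¹) := hgeo.mul_left _
    have h2 : HasSum (fun m : ℕ => 2 * Δ * ((m : ℝ) * γ ^ (m - 1)))
        (2 * Δ * (γ / (1 - γ) ^ 2 + (1 - γ)⁻¹)) := hshift.mul_left _
    have h3 : HasSum (fun m : ℕ => γ ^ m * D₀) ((1 - γ)⁻¹ * D₀) := hgeo.mul_right _
    exact h1.add (h2.add h3)
  have hsc : Summable c := hsumc.summable
  have hsab : Summable (fun m => |a m - b m|) :=
    Summable.of_nonneg_of_le (fun m => abs_nonneg _) hab hsc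
  have hsab' : Summable (fun m => a m - b m) := summable_abs_iff.mp hsab
  have hnorm : |∑' m, (a m - b m)| ≤ ∑' m, |a m - b m| := by
    have h : Summable (fun m => ‖a m - b m‖) := by simpa [Real.norm_eq_abs] using hsab
    simpa [Real.norm_eq_abs] using norm_tsum_le_tsum_norm (f := fun m => a m - b m) h
  calc |(∑' m, a m) - ∑' m, b m| = |∑' m, (a m - b m)| := by rw [Summable.tsum_sub hsa hsb]
    _ ≤ ∑' m, |a m - b m| := hnorm
    _ ≤ ∑' m, c m := Summable.tsum_le_tsum hab hsab hsc
    _ = 2 * ε * (1 - γ)⁻¹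
      + (2 * Δ * (γ / (1 - γ) ^ 2 + (1 - γ)⁻¹) + (1 - γ)⁻¹ * D₀) := hsumc.tsum_eq
    _ ≤ 3 * Δ / (1 - γ) ^ 2 + 2 * ε / (1 - γ) := by
        have h2 : (0:ℝ) < (1 - γ) ^ 2 := by positivity
        have e1 : γ / (1 - γ) ^ 2 + (1 - γ)⁻¹ = ((1 - γ) ^ 2)⁻¹ := by
          field_simp
          ring
        have e2 : (1 - γ)⁻¹ * D₀ ≤ (1 - γ)⁻¹ * (Δ / (1 - γ)) :=
          mul_le_mul_of_nonneg_left hD₀le (inv_nonneg.mpr h1γ.le)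
        have e3 : (1 - γ)⁻¹ * (Δ / (1 - γ)) = Δ / (1 - γ) ^ 2 := by
          rw [sq, ← div_div]; ring
        rw [e1]
        rw [e3] at e2
        have e4 : 2 * Δ * ((1 - γ) ^ 2)⁻¹ = 2 * (Δ / (1 - γ) ^ 2) := by
          field_simp
        have e5 : 3 * Δ / (1 - γ) ^ 2 = 3 * (Δ / (1 - γ) ^ 2) := by ring
        have e6 : 2 * ε * (1 - γ)⁻¹ = 2 * ε / (1 - γ) := by ring
        rw [e4, e5, e6]
        linarith
variable {A₁ A₂ : Type*} [Fintype A₁] [Fintype A₂]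

lemma kernel_prob {P : S → A₁ → A₂ → S → ℝ} (hP : ∀ s a₁ a₂, IsProbVec (P s a₁ a₂))
    {π₁ : S → A₁ → ℝ} {π₂ : S → A₂ → ℝ} (h₁ : IsPolicy π₁) (h₂ : IsPolicy π₂) (s : S) :
    IsProbVec (kernel P π₁ π₂ s) := by
  constructor
  · intro t
    refine Finset.sum_nonneg fun a₁ _ => Finset.sum_nonneg fun a₂ _ => ?_
    exact mul_nonneg (mul_nonneg ((h₁ s).1 a₁) ((h₂ s).1 a₂)) ((hP s a₁ a₂).1 t)
  · simp only [kernel]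
    rw [Finset.sum_comm]
    have h : ∀ a₁, ∑ a₂, ∑ t, π₁ s a₁ * π₂ s a₂ * P s a₁ a₂ t
        = π₁ s a₁ := by
      intro a₁
      have h2 : ∀ a₂, ∑ t, π₁ s a₁ * π₂ s a₂ * P s a₁ a₂ t = π₁ s a₁ * π₂ s a₂ := by
        intro a₂
        rw [← Finset.mul_sum, (hP s a₁ a₂).2, mul_one]
      rw [Finset.sum_congr rfl fun a₂ _ => h2 a₂, ← Finset.mul_sum, (h₂ s).2, mul_one]
    calc ∑ a₁, ∑ t, ∑ a₂, π₁ s a₁ * π₂ s a₂ * P s a₁ a₂ t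
        = ∑ a₁, ∑ a₂, ∑ t, π₁ s a₁ * π₂ s a₂ * P s a₁ a₂ t :=
          Finset.sum_congr rfl fun a₁ _ => Finset.sum_comm
      _ = ∑ a₁, π₁ s a₁ := Finset.sum_congr rfl fun a₁ _ => h a₁
      _ = 1 := (h₁ s).2

lemma kdist_kernel_pi1 [Nonempty A₂] {P : S → A₁ → A₂ → S → ℝ}
    (hP : ∀ s a₁ a₂, IsProbVec (P s a₁ a₂))
    {π₁ π₁' : S → A₁ → ℝ} {π₂ : S → A₂ → ℝ}
    (h₁ : IsPolicy π₁) (h₁' : IsPolicy π₁') (h₂ : IsPolicy π₂) :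
    kdist (kernel P π₁ π₂) (kernel P π₁' π₂) ≤ pdist π₁ π₁' := by
  refine kdist_le fun s => ?_
  calc ∑ t, |kernel P π₁ π₂ s t - kernel P π₁' π₂ s t|
      = ∑ t, |∑ a₁, ∑ a₂, (π₁ s a₁ - π₁' s a₁) * π₂ s a₂ * P s a₁ a₂ t| := by
        refine Finset.sum_congr rfl fun t _ => ?_
        congr 1
        simp only [kernel, ← Finset.sum_sub_distrib]
        refine Finset.sum_congr rfl fun a₁ _ => Finset.sum_congr rfl fun a₂ _ => by ring
    _ ≤ ∑ t, ∑ a₁, ∑ a₂, |π₁ s a₁ - π₁' s a₁| * π₂ s a₂ * P s a₁ a₂ t := by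
        refine Finset.sum_le_sum fun t _ => ?_
        refine le_trans (Finset.abs_sum_le_sum_abs _ _) (Finset.sum_le_sum fun a₁ _ => ?_)
        refine le_trans (Finset.abs_sum_le_sum_abs _ _) (Finset.sum_le_sum fun a₂ _ => ?_)
        rw [abs_mul, abs_mul, abs_of_nonneg ((h₂ s).1 a₂), abs_of_nonneg ((hP s a₁ a₂).1 t)]
    _ = ∑ a₁, ∑ a₂, ∑ t, |π₁ s a₁ - π₁' s a₁| * π₂ s a₂ * P s a₁ a₂ t := by
        rw [Finset.sum_comm]
        exact Finset.sum_congr rfl fun a₁ _ => Finset.sum_comm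
    _ = ∑ a₁, |π₁ s a₁ - π₁' s a₁| := by
        refine Finset.sum_congr rfl fun a₁ _ => ?_
        have h2 : ∀ a₂, ∑ t, |π₁ s a₁ - π₁' s a₁| * π₂ s a₂ * P s a₁ a₂ t
            = |π₁ s a₁ - π₁' s a₁| * π₂ s a₂ := by
          intro a₂; rw [← Finset.mul_sum, (hP s a₁ a₂).2, mul_one]
        rw [Finset.sum_congr rfl fun a₂ _ => h2 a₂, ← Finset.mul_sum, (h₂ s).2, mul_one]
    _ ≤ pdist π₁ π₁' := le_pdist π₁ π₁' s

lemma gfun_abs_le_one {r : S → A₁ → A₂ → ℝ}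
    (hr : ∀ s a₁ a₂, 0 ≤ r s a₁ a₂ ∧ r s a₁ a₂ ≤ 1)
    {π₁ : S → A₁ → ℝ} {π₂ : S → A₂ → ℝ} (h₁ : IsPolicy π₁) (h₂ : IsPolicy π₂) (s : S) :
    |gfun r π₁ π₂ s| ≤ 1 := by
  rw [abs_le]
  constructor
  · refine le_trans (by norm_num) (Finset.sum_nonneg fun a₁ _ => Finset.sum_nonneg fun a₂ _ => ?_)
    exact mul_nonneg (mul_nonneg ((h₁ s).1 a₁) ((h₂ s).1 a₂)) (hr s a₁ a₂).1
  · have hstep : gfun r π₁ π₂ s ≤ ∑ a₁, ∑ a₂, π₁ s a₁ * π₂ s a₂ := by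
      refine Finset.sum_le_sum fun a₁ _ => Finset.sum_le_sum fun a₂ _ => ?_
      calc π₁ s a₁ * π₂ s a₂ * r s a₁ a₂ ≤ π₁ s a₁ * π₂ s a₂ * 1 :=
            mul_le_mul_of_nonneg_left (hr s a₁ a₂).2
              (mul_nonneg ((h₁ s).1 a₁) ((h₂ s).1 a₂))
        _ = π₁ s a₁ * π₂ s a₂ := mul_one _
    have hone : ∑ a₁, ∑ a₂, π₁ s a₁ * π₂ s a₂ = 1 := by
      have h : ∀ a₁, ∑ a₂, π₁ s a₁ * π₂ s a₂ = π₁ s a₁ := fun a₁ => by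
        rw [← Finset.mul_sum, (h₂ s).2, mul_one]
      rw [Finset.sum_congr rfl fun a₁ _ => h a₁, (h₁ s).2]
    linarith

lemma gfun_diff_pi1 {r : S → A₁ → A₂ → ℝ}
    (hr : ∀ s a₁ a₂, 0 ≤ r s a₁ a₂ ∧ r s a₁ a₂ ≤ 1)
    {π₁ π₁' : S → A₁ → ℝ} {π₂ : S → A₂ → ℝ}
    (h₁ : IsPolicy π₁) (h₁' : IsPolicy π₁') (h₂ : IsPolicy π₂) (s : S) :
    |gfun r π₁ π₂ s - gfun r π₁' π₂ s| ≤ pdist π₁ π₁' := by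
  have heq : gfun r π₁ π₂ s - gfun r π₁' π₂ s
      = ∑ a₁, ∑ a₂, (π₁ s a₁ - π₁' s a₁) * π₂ s a₂ * r s a₁ a₂ := by
    simp only [gfun, ← Finset.sum_sub_distrib]
    refine Finset.sum_congr rfl fun a₁ _ => Finset.sum_congr rfl fun a₂ _ => by ring
  rw [heq]
  calc |∑ a₁, ∑ a₂, (π₁ s a₁ - π₁' s a₁) * π₂ s a₂ * r s a₁ a₂|
      ≤ ∑ a₁, ∑ a₂, |π₁ s a₁ - π₁' s a₁| * π₂ s a₂ := by
        refine le_trans (Finset.abs_sum_le_sum_abs _ _) (Finset.sum_le_sum fun a₁ _ => ?_)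
        refine le_trans (Finset.abs_sum_le_sum_abs _ _) (Finset.sum_le_sum fun a₂ _ => ?_)
        rw [abs_mul, abs_mul, abs_of_nonneg ((h₂ s).1 a₂)]
        calc |π₁ s a₁ - π₁' s a₁| * π₂ s a₂ * |r s a₁ a₂|
            ≤ |π₁ s a₁ - π₁' s a₁| * π₂ s a₂ * 1 := by
              refine mul_le_mul_of_nonneg_left ?_
                (mul_nonneg (abs_nonneg _) ((h₂ s).1 a₂))
              rw [abs_le]; exact ⟨by linarith [(hr s a₁ a₂).1], (hr s a₁ a₂).2⟩
          _ = |π₁ s a₁ - π₁' s a₁| * π₂ s a₂ := mul_one _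
    _ = ∑ a₁, |π₁ s a₁ - π₁' s a₁| := by
        refine Finset.sum_congr rfl fun a₁ _ => ?_
        rw [← Finset.mul_sum, (h₂ s).2, mul_one]
    _ ≤ pdist π₁ π₁' := le_pdist π₁ π₁' s

lemma gfun_diff_pi2 {r : S → A₁ → A₂ → ℝ}
    (hr : ∀ s a₁ a₂, 0 ≤ r s a₁ a₂ ∧ r s a₁ a₂ ≤ 1)
    {π₁ : S → A₁ → ℝ} {π₂ π₂' : S → A₂ → ℝ}
    (h₁ : IsPolicy π₁) (h₂ : IsPolicy π₂) (h₂' : IsPolicy π₂') (s : S) :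
    |gfun r π₁ π₂ s - gfun r π₁ π₂' s| ≤ pdist π₂ π₂' := by
  have heq : gfun r π₁ π₂ s - gfun r π₁ π₂' s
      = ∑ a₁, ∑ a₂, π₁ s a₁ * (π₂ s a₂ - π₂' s a₂) * r s a₁ a₂ := by
    simp only [gfun, ← Finset.sum_sub_distrib]
    refine Finset.sum_congr rfl fun a₁ _ => Finset.sum_congr rfl fun a₂ _ => by ring
  rw [heq]
  calc |∑ a₁, ∑ a₂, π₁ s a₁ * (π₂ s a₂ - π₂' s a₂) * r s a₁ a₂|
      ≤ ∑ a₁, ∑ a₂, π₁ s a₁ * |π₂ s a₂ - π₂' s a₂| := by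
        refine le_trans (Finset.abs_sum_le_sum_abs _ _) (Finset.sum_le_sum fun a₁ _ => ?_)
        refine le_trans (Finset.abs_sum_le_sum_abs _ _) (Finset.sum_le_sum fun a₂ _ => ?_)
        rw [abs_mul, abs_mul, abs_of_nonneg ((h₁ s).1 a₁)]
        calc π₁ s a₁ * |π₂ s a₂ - π₂' s a₂| * |r s a₁ a₂|
            ≤ π₁ s a₁ * |π₂ s a₂ - π₂' s a₂| * 1 := by
              refine mul_le_mul_of_nonneg_left ?_
                (mul_nonneg ((h₁ s).1 a₁) (abs_nonneg _))
              rw [abs_le]; exact ⟨by linarith [(hr s a₁ a₂).1], (hr s a₁ a₂).2⟩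
          _ = π₁ s a₁ * |π₂ s a₂ - π₂' s a₂| := mul_one _
    _ = ∑ a₁, π₁ s a₁ * ∑ a₂, |π₂ s a₂ - π₂' s a₂| := by
        refine Finset.sum_congr rfl fun a₁ _ => ?_
        rw [Finset.mul_sum]
    _ ≤ ∑ a₁, π₁ s a₁ * pdist π₂ π₂' := by
        refine Finset.sum_le_sum fun a₁ _ => ?_
        exact mul_le_mul_of_nonneg_left (le_pdist π₂ π₂' s) ((h₁ s).1 a₁)
    _ = pdist π₂ π₂' := by rw [← Finset.sum_mul, (h₁ s).2, one_mul]
end Stmt12Aux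

/-- Lemma 5 of the paper: the change of the bias vectors across two
consecutive episodes is bounded by C_{Q^π} = 3(ρ₁ + I₂ρ₂)/(1−γ)² + 2(ρ₁+ρ₂)/(1−γ). -/
theorem stmt_12 {S A₁ A₂ : Type*} [Fintype S] [Nonempty S] [DecidableEq S]
    [Fintype A₁] [Nonempty A₁] [Fintype A₂] [Nonempty A₂]
    (P : S → A₁ → A₂ → S → ℝ) (hP : ∀ s a₁ a₂, IsProbVec (P s a₁ a₂))
    (r : S → A₁ → A₂ → ℝ) (hr : ∀ s a₁ a₂, 0 ≤ r s a₁ a₂ ∧ r s a₁ a₂ ≤ 1)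
    (γ : ℝ) (hγ0 : 0 ≤ γ) (hγ1 : γ < 1)
    (hcontr : ∀ (π₁ : S → A₁ → ℝ) (π₂ : S → A₂ → ℝ), IsPolicy π₁ → IsPolicy π₂ →
      Contractive γ (kernel P π₁ π₂))
    (dstat : (S → A₁ → ℝ) → (S → A₂ → ℝ) → S → ℝ)
    (hdstat : ∀ (π₁ : S → A₁ → ℝ) (π₂ : S → A₂ → ℝ), IsPolicy π₁ → IsPolicy π₂ →
      IsProbVec (dstat π₁ π₂) ∧ vmul (dstat π₁ π₂) (kernel P π₁ π₂) = dstat π₁ π₂)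
    (I₂ : ℝ) (hI₂0 : 0 ≤ I₂)
    (hinfl : ∀ (π₁ : S → A₁ → ℝ) (π₂ π₂' : S → A₂ → ℝ),
      IsPolicy π₁ → IsPolicy π₂ → IsPolicy π₂' →
      kdist (kernel P π₁ π₂) (kernel P π₁ π₂') ≤ I₂ * pdist π₂ π₂')
    (ρ₁ ρ₂ : ℝ)
    (π₁t π₁p : S → A₁ → ℝ) (hπ₁t : IsPolicy π₁t) (hπ₁p : IsPolicy π₁p)
    (π₂t π₂p : S → A₂ → ℝ) (hπ₂t : IsPolicy π₂t) (hπ₂p : IsPolicy π₂p)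
    (hρ₁ : pdist π₁t π₁p ≤ ρ₁) (hρ₂ : pdist π₂t π₂p ≤ ρ₂) :
    ∀ s, |bias P r dstat π₁t π₂t s - bias P r dstat π₁p π₂p s| ≤
      3 * (ρ₁ + I₂ * ρ₂) / (1 - γ) ^ 2 + 2 * (ρ₁ + ρ₂) / (1 - γ) := by
  intro s
  obtain ⟨hdt_prob, hdt_stat⟩ := hdstat π₁t π₂t hπ₁t hπ₂t
  obtain ⟨hdp_prob, hdp_stat⟩ := hdstat π₁p π₂p hπ₁p hπ₂p
  have hKt : ∀ u, IsProbVec (kernel P π₁t π₂t u) :=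
    fun u => Stmt12Aux.kernel_prob hP hπ₁t hπ₂t u
  have hKp : ∀ u, IsProbVec (kernel P π₁p π₂p u) :=
    fun u => Stmt12Aux.kernel_prob hP hπ₁p hπ₂p u
  have hΔ : kdist (kernel P π₁t π₂t) (kernel P π₁p π₂p) ≤ ρ₁ + I₂ * ρ₂ := by
    have h1 : kdist (kernel P π₁t π₂t) (kernel P π₁t π₂p) ≤ I₂ * ρ₂ :=
      le_trans (hinfl π₁t π₂t π₂p hπ₁t hπ₂t hπ₂p) (mul_le_mul_of_nonneg_left hρ₂ hI₂0)
    have h2 : kdist (kernel P π₁t π₂p) (kernel P π₁p π₂p) ≤ ρ₁ :=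
      le_trans (Stmt12Aux.kdist_kernel_pi1 hP hπ₁t hπ₁p hπ₂p) hρ₁
    have h3 := Stmt12Aux.kdist_triangle (kernel P π₁t π₂t) (kernel P π₁t π₂p)
      (kernel P π₁p π₂p)
    linarith
  have hε : ∀ u, |gfun r π₁t π₂t u - gfun r π₁p π₂p u| ≤ ρ₁ + ρ₂ := by
    intro u
    have h1 : |gfun r π₁t π₂t u - gfun r π₁t π₂p u| ≤ ρ₂ :=
      le_trans (Stmt12Aux.gfun_diff_pi2 hr hπ₁t hπ₂t hπ₂p u) hρ₂
    have h2 : |gfun r π₁t π₂p u - gfun r π₁p π₂p u| ≤ ρ₁ :=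
      le_trans (Stmt12Aux.gfun_diff_pi1 hr hπ₁t hπ₁p hπ₂p u) hρ₁
    have h3 := abs_sub_le (gfun r π₁t π₂t u) (gfun r π₁t π₂p u) (gfun r π₁p π₂p u)
    linarith
  exact Stmt12Aux.key hγ0 hγ1 hKt hKp (hcontr π₁t π₂t hπ₁t hπ₂t) (hcontr π₁p π₂p hπ₁p hπ₂p)
    hdt_prob hdp_prob hdt_stat hdp_stat
    (Stmt12Aux.gfun_abs_le_one hr hπ₁t hπ₂t) (Stmt12Aux.gfun_abs_le_one hr hπ₁p hπ₂p)
    hΔ hε s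
end
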